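/- Fix an integer N ≥ 1 and let S be the set defined in the context. Then S does not contain any infinite arithmetic progression with positive irrational gap; that is, there is no x ∈ S and no irrational real number Δ > 0 such that x + nΔ ∈ S for all natural numbers n. -/

import Mathlib

/-!
Block `k` of `S` is the union of the `S_m` with `β_k ≤ m < β_{k+1}`: it has length `(N+1)^k`,
and every point `y` in it has fractional part outside `Q_{k mod N}`.  On the other hand, by
Dirichlet's approximation theorem some multiple `qΔ` of an irrational `Δ` lies within
`e ≠ 0`, `|e| < 1/N`, of an integer, so stepping along the progression by `q` moves the
fractional part in steps of `|e|` in a fixed direction.  Hence a window of bounded length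
`M` (depending only on `Δ` and `N`) of any progression with gap `Δ` meets every `Q_i` modulo
`1`.  Once `(N+1)^k` exceeds that length, the progression enters `Q_{k mod N}` inside block
`k`.
-/

open MeasureTheory

noncomputable section

/-- The geometric sums `β_k = Σ_{j=0}^{k-1} (N+1)^j`. -/
def beta (N k : ℕ) : ℕ := ∑ j ∈ Finset.range k, (N + 1) ^ j

/-- The deleted intervals `Q_i = [i/N, (i+1)/N)`. -/
def Qset (N i : ℕ) : Set ℝ := Set.Ico ((i : ℝ) / N) (((i : ℝ) + 1) / N)

/-- `R_i = [0,1) \ Q_i`. -/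
def Rset (N i : ℕ) : Set ℝ := Set.Ico (0 : ℝ) 1 \ Qset N i

/-- For `m ≥ 0`, the unique `k` with `β_k ≤ m < β_{k+1}`. -/
def kIdx (N m : ℕ) : ℕ := Nat.findGreatest (fun k => beta N k ≤ m) m

/-- `S_m` for nonnegative `m` : `S_0 = R_0`, and `S_m = m + R_{(k mod N)}` for `m > 0`. -/
def Spos (N m : ℕ) : Set ℝ :=
  if m = 0 then Rset N 0 else (fun x => x + (m : ℝ)) '' Rset N (kIdx N m % N)

/-- `S_m` for all integers `m`: for `m < 0`, `S_m = 2m + S_{|m|}`. -/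
def Sm (N : ℕ) (m : ℤ) : Set ℝ :=
  if 0 ≤ m then Spos N m.toNat else (fun x => x + 2 * (m : ℝ)) '' Spos N m.natAbs

/-- The set `S = ⋃_{m ∈ ℤ} S_m`. -/
def SetS (N : ℕ) : Set ℝ := ⋃ m : ℤ, Sm N m

theorem exists_nat_add_mul_mem_Ico {Δ x b : ℝ} (hΔ : 0 < Δ) (hxb : x ≤ b) :
    ∃ n : ℕ, x + n * Δ ∈ Set.Ico b (b + Δ) := by
  refine ⟨⌈(b - x) / Δ⌉₊, ?_, ?_⟩
  · linarith [(div_le_iff₀ hΔ).1 (Nat.le_ceil ((b - x) / Δ))]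
  · have h := Nat.ceil_lt_add_one (div_nonneg (sub_nonneg.2 hxb) hΔ.le)
    rw [← sub_lt_iff_lt_add, lt_div_iff₀ hΔ] at h
    linarith

theorem exists_int_mul_add_int_mem_Ico {e : ℝ} (he : e ≠ 0) (c a : ℝ) :
    ∃ m : ℤ, |m| ≤ ⌊|e|⁻¹⌋₊ ∧ ∃ z : ℤ, c + m * e + z ∈ Set.Ico a (a + |e|) := by
  have hp : 0 < |e| := abs_pos.2 he
  set d := Int.fract (c - a)
  set n := ⌊d / |e|⌋₊
  have hn_le : (n : ℝ) * |e| ≤ d := (le_div_iff₀ hp).1 (Nat.floor_le (by positivity))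
  have hn_lt : d < (n + 1) * |e| := (div_lt_iff₀ hp).1 (Nat.lt_floor_add_one _)
  have hn_bound : n ≤ ⌊|e|⁻¹⌋₊ :=
    Nat.floor_le_floor (by rw [← one_div]; gcongr; exact (Int.fract_lt_one _).le)
  obtain ⟨m, hm_abs, hm_mul⟩ : ∃ m : ℤ, |m| = n ∧ (m : ℝ) * e = -(n * |e|) := by
    rcases he.lt_or_gt with h | h
    · exact ⟨n, by simp, by rw [abs_of_neg h]; push_cast; ring⟩
    · exact ⟨-n, by simp, by rw [abs_of_pos h]; push_cast; ring⟩
  refine ⟨m, by omega, -⌊c - a⌋, ?_⟩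
  have hd : d = c - a - ⌊c - a⌋ := (Int.self_sub_floor _).symm
  rw [hm_mul, Set.mem_Ico]
  push_cast
  constructor <;> linarith

theorem Irrational.exists_nat_le_add_mul_add_int_mem_Ico {Δ ε : ℝ} (hΔ : Irrational Δ)
    (hε : 0 < ε) : ∃ M : ℕ, ∀ c a : ℝ,
      ∃ n : ℕ, n ≤ M ∧ ∃ z : ℤ, c + n * Δ + z ∈ Set.Ico a (a + ε) := by
  obtain ⟨K, hK⟩ := exists_nat_one_div_lt hε
  obtain ⟨q, hq, -, hqe⟩ := Real.exists_nat_abs_mul_sub_round_le Δ K.succ_pos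
  set e := q * Δ - round (q * Δ)
  have he : e ≠ 0 := sub_ne_zero.2 ((hΔ.natCast_mul hq.ne').ne_int _)
  have heε : |e| < ε := by
    refine hqe.trans_lt (lt_of_le_of_lt ?_ hK)
    gcongr
    linarith
  set B := ⌊|e|⁻¹⌋₊
  refine ⟨2 * B * q, fun c a => ?_⟩
  -- Starting `B q` steps late lets the index `(B + m) q` absorb a negative `m`.
  obtain ⟨m, hm, z, hz⟩ := exists_int_mul_add_int_mem_Ico he (c + (B * q : ℕ) * Δ) a
  obtain ⟨n, hn⟩ : ∃ n : ℕ, (n : ℤ) = B + m := ⟨_, Int.toNat_of_nonneg (by grind)⟩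
  refine ⟨n * q, ?_, z - m * round (q * Δ), ?_⟩
  · exact Nat.mul_le_mul_right q (by grind)
  · have hn' : (n : ℝ) = B + m := by exact_mod_cast hn
    have : c + ((n * q : ℕ) : ℝ) * Δ + ((z - m * round (q * Δ) : ℤ) : ℝ) =
        c + ((B * q : ℕ) : ℝ) * Δ + m * e + z := by
      push_cast
      rw [hn']
      simp only [e]
      ring
    rw [this]
    exact Set.Ico_subset_Ico_right (by linarith) hz

theorem beta_succ (N k : ℕ) : beta N (k + 1) = beta N k + (N + 1) ^ k :=
  Finset.sum_range_succ _ _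

theorem le_beta (N k : ℕ) : k ≤ beta N k := by
  simpa [beta] using
    Finset.card_nsmul_le_sum (Finset.range k) _ 1 fun j _ => Nat.one_le_pow j (N + 1) N.succ_pos

theorem kIdx_eq {N k m : ℕ} (h₁ : beta N k ≤ m) (h₂ : m < beta N (k + 1)) : kIdx N m = k := by
  have hβ : Monotone (beta N) := fun _ _ h =>
    Finset.sum_le_sum_of_subset (Finset.range_subset_range.2 h)
  refine le_antisymm ?_ (Nat.le_findGreatest ((le_beta N k).trans h₁) h₁)
  by_contra! hlt
  have hkIdx : beta N (kIdx N m) ≤ m :=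
    Nat.findGreatest_of_ne_zero (P := fun k => beta N k ≤ m) rfl (by omega)
  have := hβ (show k + 1 ≤ kIdx N m from hlt)
  omega

theorem Spos_subset_Ico (N p : ℕ) : Spos N p ⊆ Set.Ico (p : ℝ) (p + 1) := by
  unfold Spos
  split_ifs with h
  · subst h
    intro x hx
    simpa using hx.1
  · rintro _ ⟨r, ⟨⟨h₀, h₁⟩, -⟩, rfl⟩
    constructor <;> linarith

theorem Sm_subset_Ico (N : ℕ) (m : ℤ) : Sm N m ⊆ Set.Ico (m : ℝ) (m + 1) := by
  unfold Sm
  split_ifs with h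
  · have : (m.toNat : ℝ) = m := by exact_mod_cast Int.toNat_of_nonneg h
    simpa only [this] using Spos_subset_Ico N m.toNat
  · rintro _ ⟨r, hr, rfl⟩
    obtain ⟨h₀, h₁⟩ := Spos_subset_Ico N m.natAbs hr
    have : (m.natAbs : ℝ) = -m := by
      rw [Nat.cast_natAbs, Int.cast_abs, abs_of_neg (by exact_mod_cast not_le.1 h)]
    rw [this] at h₀ h₁
    constructor <;> linarith

theorem mem_Sm_floor_of_mem_SetS {N : ℕ} {y : ℝ} (hy : y ∈ SetS N) : y ∈ Sm N ⌊y⌋ := by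
  obtain ⟨m, hm⟩ := Set.mem_iUnion.1 hy
  rwa [Int.floor_eq_iff.2 (Sm_subset_Ico N m hm)]

theorem Sm_natCast {N p : ℕ} (hp : p ≠ 0) :
    Sm N p = (fun x => x + (p : ℝ)) '' Rset N (kIdx N p % N) := by
  simp [Sm, Spos, hp]

theorem fract_not_mem_Qset_of_mem_SetS {N k : ℕ} (hk : 1 ≤ k) {y : ℝ} (hy : y ∈ SetS N)
    (h₁ : beta N k ≤ y) (h₂ : y < beta N (k + 1)) : Int.fract y ∉ Qset N (k % N) := by
  have hy₀ : 0 ≤ y := (Nat.cast_nonneg _).trans h₁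
  set p := ⌊y⌋₊
  have hp₁ : beta N k ≤ p := Nat.le_floor h₁
  have hp₂ : p < beta N (k + 1) := (Nat.floor_lt hy₀).2 h₂
  have hp : p ≠ 0 := by have := le_beta N k; omega
  have hmem := mem_Sm_floor_of_mem_SetS hy
  rw [← Int.natCast_floor_eq_floor hy₀, Sm_natCast hp, kIdx_eq hp₁ hp₂] at hmem
  obtain ⟨r, hr, hry⟩ := hmem
  have : Int.fract y = r := by
    rw [← hry, Int.fract_add_natCast, Int.fract_eq_self.2 hr.1]
  exact this ▸ hr.2

theorem Qset_subset_Ico {N i : ℕ} (hi : i < N) : Qset N i ⊆ Set.Ico 0 1 := by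
  have hN : (0 : ℝ) < N := by exact_mod_cast (Nat.zero_le i).trans_lt hi
  refine Set.Ico_subset_Ico (by positivity) ((div_le_one hN).2 ?_)
  exact_mod_cast hi

/-- `S` contains no infinite arithmetic progression with positive irrational gap. -/
theorem stmt_2 (N : ℕ) (hN : 1 ≤ N) :
    ¬ ∃ x ∈ SetS N, ∃ Δ : ℝ, 0 < Δ ∧ Irrational Δ ∧
      ∀ n : ℕ, x + (n : ℝ) * Δ ∈ SetS N := by
  rintro ⟨x, -, Δ, hΔ, hirr, hAP⟩
  have hN' : (1 : ℝ) ≤ N := by exact_mod_cast hN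
  obtain ⟨M, hM⟩ := hirr.exists_nat_le_add_mul_add_int_mem_Ico (ε := 1 / N) (by positivity)
  obtain ⟨k, hk, hxk, hMk⟩ : ∃ k : ℕ, 1 ≤ k ∧ x ≤ k ∧ (M + 1) * Δ ≤ ((N : ℝ) + 1) ^ k :=
    ((Filter.eventually_ge_atTop 1).and
      ((tendsto_natCast_atTop_atTop.eventually_ge_atTop x).and
      ((tendsto_pow_atTop_atTop_of_one_lt (by linarith)).eventually_ge_atTop _))).exists
  obtain ⟨n₀, hn₀⟩ := exists_nat_add_mul_mem_Ico hΔ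
    (hxk.trans (Nat.cast_le.2 (le_beta N k) : (k : ℝ) ≤ beta N k))
  obtain ⟨n, hnM, z, hz⟩ := hM (x + n₀ * Δ) ((k % N : ℕ) / N)
  have hy : x + ((n₀ + n : ℕ) : ℝ) * Δ = x + n₀ * Δ + n * Δ := by push_cast; ring
  have hQ : x + ((n₀ + n : ℕ) : ℝ) * Δ + z ∈ Qset N (k % N) := by
    rwa [Qset, add_div, hy]
  have hnM' : (n : ℝ) ≤ M := by exact_mod_cast hnM
  refine fract_not_mem_Qset_of_mem_SetS hk (hAP (n₀ + n)) ?_ ?_ ?_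
  · rw [hy]
    linarith [hn₀.1, mul_nonneg n.cast_nonneg hΔ.le]
  · rw [hy, beta_succ]
    push_cast
    nlinarith [hn₀.2]
  · rw [← Int.fract_add_intCast _ z, Int.fract_eq_self.2 (Qset_subset_Ico (Nat.mod_lt k hN) hQ)]
    exact hQ
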